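/- arXiv:1408.1964 — 6 statements merged into one kernel-verified Lean document; each statement's English description precedes it below -/
import Mathlib

section
/- Let T be a finite rooted tree and w a nonnegative weight function on its nodes with total weight 1. Then either there exists a path P from the root (following the descendance order) whose nodes have total weight at least 1/4, or there exist two sets A and B of nodes, each of total weight at least 1/4, such that no node of A is an ancestor or descendant of any node of B. -/
/-!
Let `W m` be the weight of the subtree rooted at `m` and pick `v` maximal with `W v > 1/2`.
If the path from the root to `v` weighs less than `1/4`, the other nodes weigh more than `3/4` and
are covered by the subtrees rooted at the minimal nodes off that path. These subtrees are pairwise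
unrelated, and each weighs at most `1/2`: it either lies strictly above `v`, so maximality applies,
or it is disjoint from the subtree of `v`. A family of weights at most `2c` with total at least `3c`
splits into two groups of weight at least `c` each.
-/

open Finset

theorem Finset.exists_subset_le_sum_le_add {ι M : Type*} [DecidableEq ι] [AddCommGroup M]
    [LinearOrder M] [IsOrderedAddMonoid M] {s : Finset ι} {f : ι → M} {c t : M}
    (hc₀ : 0 < c) (hf : ∀ i ∈ s, f i ≤ t) (hc : c ≤ ∑ i ∈ s, f i) :
    ∃ u ⊆ s, c ≤ ∑ i ∈ u, f i ∧ ∑ i ∈ u, f i ≤ c + t := by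
  induction s using Finset.induction_on with
  | empty => exact absurd hc (by simpa using hc₀)
  | insert a s ha ih =>
    rw [sum_insert ha] at hc
    by_cases hs : c ≤ ∑ i ∈ s, f i
    · obtain ⟨u, hus, hu⟩ := ih (fun i hi => hf i (mem_insert_of_mem hi)) hs
      exact ⟨u, hus.trans (subset_insert a s), hu⟩
    · refine ⟨insert a s, subset_rfl, by rwa [sum_insert ha], ?_⟩
      rw [sum_insert ha, add_comm c]
      exact add_le_add (hf a (mem_insert_self a s)) (not_le.1 hs).le

theorem Finset.exists_subset_le_sum_and_le_sum_sdiff {ι M : Type*} [DecidableEq ι]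
    [AddCommGroup M] [LinearOrder M] [IsOrderedAddMonoid M] {s : Finset ι} {f : ι → M} {c : M}
    (hc : 0 < c) (hf : ∀ i ∈ s, f i ≤ 2 • c) (hs : 3 • c ≤ ∑ i ∈ s, f i) :
    ∃ t ⊆ s, c ≤ ∑ i ∈ t, f i ∧ c ≤ ∑ i ∈ s \ t, f i := by
  by_cases hbig : ∃ i ∈ s, c ≤ f i
  · obtain ⟨i, hi, hci⟩ := hbig
    refine ⟨{i}, singleton_subset_iff.2 hi, by simpa using hci, ?_⟩
    rw [sum_sdiff_eq_sub (singleton_subset_iff.2 hi), sum_singleton, le_sub_iff_add_le]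
    calc c + f i ≤ c + 2 • c := add_le_add_right (hf i hi) c
      _ = 3 • c := by rw [add_comm, ← succ_nsmul]
      _ ≤ _ := hs
  · push Not at hbig
    have hcs : c ≤ ∑ i ∈ s, f i := by
      simpa using (nsmul_le_nsmul_left hc.le (show 1 ≤ 3 by norm_num)).trans hs
    obtain ⟨t, hts, hct, htc⟩ := exists_subset_le_sum_le_add hc (fun i hi => (hbig i hi).le) hcs
    refine ⟨t, hts, hct, ?_⟩
    rw [sum_sdiff_eq_sub hts, le_sub_iff_add_le]
    calc c + ∑ i ∈ t, f i ≤ c + (c + c) := add_le_add_right htc c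
      _ = 3 • c := by rw [succ_nsmul, two_nsmul, add_comm]
      _ ≤ _ := hs

section TreeOrder

variable {V : Type*} [PartialOrder V]

theorem incompRel_of_le_of_le (htree : ∀ v : V, IsChain (· ≤ ·) {u | u ≤ v}) {a b x y : V}
    (hab : IncompRel (· ≤ ·) a b) (hax : a ≤ x) (hby : b ≤ y) : IncompRel (· ≤ ·) x y :=
  ⟨fun hxy => ((htree y).total (hax.trans hxy) hby).elim hab.1 hab.2,
    fun hyx => ((htree x).total hax (hby.trans hyx)).elim hab.1 hab.2⟩

variable [Fintype V] [DecidableLE V]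

theorem disjoint_filter_le_of_incompRel (htree : ∀ v : V, IsChain (· ≤ ·) {u | u ≤ v})
    {a b : V} (hab : IncompRel (· ≤ ·) a b) :
    Disjoint ({x | a ≤ x} : Finset V) ({x | b ≤ x} : Finset V) := by
  rw [disjoint_left]
  intro x hax hbx
  simp only [mem_filter, mem_univ, true_and] at hax hbx
  exact (incompRel_of_le_of_le htree hab hax hbx).1 le_rfl

theorem sum_filter_le_add_sum_filter_le_le_sum (htree : ∀ v : V, IsChain (· ≤ ·) {u | u ≤ v})
    {w : V → ℝ} (hw : ∀ v, 0 ≤ w v) {a b : V} (hab : IncompRel (· ≤ ·) a b) :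
    ∑ x with a ≤ x, w x + ∑ x with b ≤ x, w x ≤ ∑ x, w x := by
  classical
  rw [← sum_union (disjoint_filter_le_of_incompRel htree hab)]
  exact sum_le_univ_sum_of_nonneg hw

theorem sum_filter_le_le_half_of_maximal (htree : ∀ v : V, IsChain (· ≤ ·) {u | u ≤ v})
    {w : V → ℝ} (hw : ∀ v, 0 ≤ w v) (hw1 : ∑ x, w x = 1) {v : V}
    (hv : Maximal (fun m => 1 / 2 < ∑ x with m ≤ x, w x) v) {m : V} (hm : ¬ m ≤ v) :
    ∑ x with m ≤ x, w x ≤ 1 / 2 := by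
  by_contra! hmw
  by_cases hvm : v ≤ m
  · exact hm (hv.2 hmw hvm)
  · linarith [hv.1, sum_filter_le_add_sum_filter_le_le_sum htree hw ⟨hm, hvm⟩]

variable [DecidableEq V]

theorem filter_subset_biUnion_minimal (P : V → Prop) [DecidablePred P]
    [DecidablePred (Minimal P)] :
    ({x | P x} : Finset V) ⊆ ({m | Minimal P m} : Finset V).biUnion (fun m => {x | m ≤ x}) := by
  intro x hx
  simp only [mem_biUnion, mem_filter, mem_univ, true_and] at hx ⊢
  obtain ⟨m, hmx, hm⟩ := exists_minimal_le_of_wellFoundedLT P x hx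
  exact ⟨m, hm, hmx⟩

theorem sum_biUnion_filter_le (htree : ∀ v : V, IsChain (· ≤ ·) {u | u ≤ v}) {s : Finset V}
    (hs : IsAntichain (· ≤ ·) (s : Set V)) (w : V → ℝ) :
    ∑ x ∈ s.biUnion (fun m => {x | m ≤ x}), w x = ∑ m ∈ s, ∑ x with m ≤ x, w x :=
  sum_biUnion fun _ ha _ hb hne =>
    disjoint_filter_le_of_incompRel htree ⟨hs ha hb hne, hs hb ha hne.symm⟩

theorem incompRel_of_mem_biUnion_of_mem_biUnion_sdiff
    (htree : ∀ v : V, IsChain (· ≤ ·) {u | u ≤ v}) {s t : Finset V}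
    (hs : IsAntichain (· ≤ ·) (s : Set V)) (hts : t ⊆ s) {x y : V}
    (hx : x ∈ t.biUnion (fun m => {x | m ≤ x})) (hy : y ∈ (s \ t).biUnion (fun m => {x | m ≤ x})) :
    IncompRel (· ≤ ·) x y := by
  simp only [mem_biUnion, mem_filter, mem_univ, true_and, mem_sdiff] at hx hy
  obtain ⟨a, hat, hax⟩ := hx
  obtain ⟨b, ⟨hbs, hbt⟩, hby⟩ := hy
  have hne : a ≠ b := ne_of_mem_of_not_mem hat hbt
  exact incompRel_of_le_of_le htree ⟨hs (hts hat) hbs hne, hs hbs (hts hat) hne.symm⟩ hax hby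

end TreeOrder

theorem stmt0_general {V : Type*} [Fintype V] [PartialOrder V]
    (r : V) (hroot : ∀ v : V, r ≤ v)
    (htree : ∀ v : V, IsChain (· ≤ ·) {u : V | u ≤ v})
    (w : V → ℝ) (hw : ∀ v, 0 ≤ w v) (hw1 : ∑ v, w v = 1) :
    (∃ P : Finset V, r ∈ P ∧ IsChain (· ≤ ·) (P : Set V) ∧ 1 / 4 ≤ ∑ v ∈ P, w v) ∨
    (∃ A B : Finset V,
      (∀ a ∈ A, ∀ b ∈ B, ¬ a ≤ b ∧ ¬ b ≤ a) ∧
      1 / 4 ≤ ∑ v ∈ A, w v ∧ 1 / 4 ≤ ∑ v ∈ B, w v) := by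
  classical
  set W : V → ℝ := fun m => ∑ x with m ≤ x, w x
  obtain ⟨v, -, hv⟩ := exists_maximal_ge_of_wellFoundedGT (fun m => 1 / 2 < W m) r
    (by norm_num [W, hroot, hw1])
  by_cases hpath : 1 / 4 ≤ ∑ x with x ≤ v, w x
  · left
    exact ⟨_, by simp [hroot], by simpa using htree v, hpath⟩
  right
  set R : Finset V := {m | Minimal (fun x => ¬ x ≤ v) m}
  have hR : IsAntichain (· ≤ ·) (R : Set V) := by
    simpa [R] using setOfPred_minimal_antichain (fun x => ¬ x ≤ v)
  have hRW : ∀ m ∈ R, W m ≤ 2 • (1 / 4) := fun m hm => calc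
    W m ≤ 1 / 2 := sum_filter_le_le_half_of_maximal htree hw hw1 hv (mem_filter.1 hm).2.1
    _ = 2 • (1 / 4) := by norm_num
  have hRsum : 3 • (1 / 4 : ℝ) ≤ ∑ m ∈ R, W m := calc
    3 • (1 / 4 : ℝ) ≤ ∑ x with ¬ x ≤ v, w x := by
      norm_num
      linarith [sum_filter_add_sum_filter_not univ (· ≤ v) w]
    _ ≤ ∑ x ∈ R.biUnion (fun m => {x | m ≤ x}), w x :=
      sum_le_sum_of_subset_of_nonneg (filter_subset_biUnion_minimal _) fun x _ _ => hw x
    _ = ∑ m ∈ R, W m := sum_biUnion_filter_le htree hR w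
  obtain ⟨G, hGR, hG, hRG⟩ := exists_subset_le_sum_and_le_sum_sdiff (by norm_num) hRW hRsum
  refine ⟨G.biUnion (fun m => {x | m ≤ x}), (R \ G).biUnion (fun m => {x | m ≤ x}),
    fun a ha b hb => incompRel_of_mem_biUnion_of_mem_biUnion_sdiff htree hR hGR ha hb, ?_, ?_⟩
  · rwa [sum_biUnion_filter_le htree (hR.subset hGR)]
  · rwa [sum_biUnion_filter_le htree (hR.subset sdiff_subset)]

/-- A finite rooted tree is modelled by a partial order (the
ancestor/descendance order) on a finite nonempty type, in which the root `r` is the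
least element and the set of ancestors of every node is a chain.  Given a nonnegative
weight function of total weight `1`, either some path from the root (a chain of nodes
containing the root) has weight at least `1/4`, or there are two unrelated sets of
nodes, each of weight at least `1/4`. -/
theorem stmt0 {V : Type*} [Fintype V] [DecidableEq V] [PartialOrder V]
    (r : V) (hroot : ∀ v : V, r ≤ v)
    (htree : ∀ v : V, IsChain (· ≤ ·) {u : V | u ≤ v})
    (w : V → ℝ) (hw : ∀ v, 0 ≤ w v) (hw1 : ∑ v, w v = 1) :
    (∃ P : Finset V, r ∈ P ∧ IsChain (· ≤ ·) (P : Set V) ∧ 1 / 4 ≤ ∑ v ∈ P, w v) ∨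
    (∃ A B : Finset V,
      (∀ a ∈ A, ∀ b ∈ B, ¬ a ≤ b ∧ ¬ b ≤ a) ∧
      1 / 4 ≤ ∑ v ∈ A, w v ∧ 1 / 4 ≤ ∑ v ∈ B, w v) :=
  stmt0_general r hroot htree w hw hw1
end

section
/- Let G be a graph and P a dominating induced path in G with vertex ordering p_1,...,p_m, and let I be a set of k consecutive vertices of P. Suppose G contains no induced cycle of length at least k. If a vertex v ∉ P has a neighbor among vertices of P strictly to the left of I and a neighbor strictly to the right of I, then v has a neighbor in I. -/
/-!
Take the last neighbour `p a` of `v` left of `I` and the first neighbour `p b` right of `I`.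
Since `v` has no neighbour in `I`, it has none among `p (a+1), …, p (b-1)`, so `v` together with
the induced subpath `p a, …, p b` is a hole on `b - a + 2 ≥ k + 3` vertices.
-/

namespace Nat

lemma exists_consecutive_straddling {P : ℕ → Prop} {i k x y : ℕ}
    (hx : x < i) (hPx : P x) (hy : i + k ≤ y) (hPy : P y)
    (hgap : ∀ j, i ≤ j → j < i + k → ¬ P j) :
    ∃ a b, a < i ∧ i + k ≤ b ∧ P a ∧ P b ∧ ∀ j, a < j → j < b → ¬ P j := by
  classical
  have hex : ∃ j, i ≤ j ∧ P j := ⟨y, by omega, hPy⟩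
  have hbi : i ≤ Nat.find hex := (Nat.find_spec hex).1
  have hbk : i + k ≤ Nat.find hex := by
    by_contra! h
    exact hgap _ hbi h (Nat.find_spec hex).2
  have hxa : x ≤ Nat.findGreatest P (i - 1) := Nat.le_findGreatest (by omega) hPx
  have hai : Nat.findGreatest P (i - 1) ≤ i - 1 := Nat.findGreatest_le _
  refine ⟨Nat.findGreatest P (i - 1), Nat.find hex, by omega, hbk,
    Nat.findGreatest_spec (by omega) hPx, (Nat.find_spec hex).2, fun j haj hjb hPj => ?_⟩
  rcases lt_or_ge j i with hji | hij
  · exact Nat.findGreatest_is_greatest haj (by omega) hPj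
  · exact Nat.find_min hex hjb ⟨hij, hPj⟩

end Nat

namespace SimpleGraph

lemma cycleGraph_adj_iff_val {n : ℕ} {u v : Fin (n + 2)} :
    (cycleGraph (n + 2)).Adj u v ↔ u.val + 1 = v.val ∨ v.val + 1 = u.val ∨
      (u.val = 0 ∧ v.val = n + 1) ∨ (v.val = 0 ∧ u.val = n + 1) := by
  have hu := u.isLt
  have hv := v.isLt
  rw [cycleGraph_adj']
  rcases lt_trichotomy v u with h | rfl | h
  · rw [Fin.sub_val_of_le h.le, Fin.coe_sub_iff_lt.mpr h]
    omega
  · simp only [sub_self, Fin.val_zero]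
    omega
  · rw [Fin.sub_val_of_le h.le, Fin.coe_sub_iff_lt.mpr h]
    omega

def pathGraph.segmentEmbedding {m : ℕ} (a n : ℕ) (h : a + n ≤ m) : pathGraph n ↪g pathGraph m where
  toFun j := Fin.castLE h (Fin.natAdd a j)
  inj' := (Fin.castLE_injective h).comp (Fin.natAdd_injective _ _)
  map_rel_iff' {j j'} := by
    simp only [Function.Embedding.coeFn_mk, pathGraph_adj, Fin.val_castLE, Fin.val_natAdd]
    omega

variable {V : Type*} {G : SimpleGraph V}

def Embedding.cycleGraphCons {n : ℕ} (q : pathGraph (n + 1) ↪g G) (v : V) (hv : ∀ j, v ≠ q j)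
    (hadj : ∀ j, G.Adj v (q j) ↔ j = 0 ∨ j = Fin.last n) : cycleGraph (n + 2) ↪g G where
  toFun := Fin.cons v q
  inj' := Fin.cons_injective_iff.mpr ⟨fun ⟨j, hj⟩ => hv j hj.symm, q.injective⟩
  map_rel_iff' := by
    intro x y
    have hend : ∀ j : Fin (n + 1), G.Adj v (q j) ↔ (cycleGraph (n + 2)).Adj 0 j.succ := by
      intro j
      have := j.isLt
      rw [hadj, cycleGraph_adj_iff_val, Fin.ext_iff, Fin.ext_iff]
      simp only [Fin.val_zero, Fin.val_last, Fin.val_succ, true_and]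
      omega
    induction x using Fin.cases <;> induction y using Fin.cases
    · simp
    · simpa using hend _
    · simpa [G.adj_comm, (cycleGraph _).adj_comm] using hend _
    · simp only [Function.Embedding.coeFn_mk, Fin.cons_succ, q.map_adj_iff, pathGraph_adj,
        cycleGraph_adj_iff_val, Fin.val_succ]
      omega

end SimpleGraph

theorem stmt3_general {V : Type*} (G : SimpleGraph V) (k m : ℕ)
    (hhole : ∀ l, k ≤ l → IsEmpty (SimpleGraph.cycleGraph l ↪g G))
    (p : SimpleGraph.pathGraph m ↪g G)
    (i : ℕ)
    (v : V) (hv : ∀ j : Fin m, v ≠ p j)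
    (hleft : ∃ j : Fin m, (j : ℕ) < i ∧ G.Adj v (p j))
    (hright : ∃ j : Fin m, i + k ≤ (j : ℕ) ∧ G.Adj v (p j)) :
    ∃ j : Fin m, i ≤ (j : ℕ) ∧ (j : ℕ) < i + k ∧ G.Adj v (p j) := by
  by_contra! hI
  obtain ⟨x, hx, hvx⟩ := hleft
  obtain ⟨y, hy, hvy⟩ := hright
  obtain ⟨a, b, hai, hbi, ⟨_, hva⟩, ⟨hbm, hvb⟩, hmid⟩ :=
    Nat.exists_consecutive_straddling (P := fun j => ∃ h : j < m, G.Adj v (p ⟨j, h⟩))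
      hx ⟨x.2, hvx⟩ hy ⟨y.2, hvy⟩ fun j hij hjk ⟨hj, hadj⟩ => hI ⟨j, hj⟩ hij hjk hadj
  let q := (SimpleGraph.pathGraph.segmentEmbedding a (b - a + 1) (by omega)).trans p
  have hq : ∀ j, G.Adj v (q j) ↔ j = 0 ∨ j = Fin.last (b - a) := by
    intro j
    have hqj : q j = p ⟨a + j, by omega⟩ := rfl
    rw [hqj, Fin.ext_iff, Fin.ext_iff, Fin.val_zero, Fin.val_last]
    constructor
    · intro hadj
      by_contra! hne
      exact hmid (a + j) (by omega) (by omega) ⟨_, hadj⟩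
    · rintro (hj | hj)
      · simpa [hj] using hva
      · simpa [show a + j = b by omega] using hvb
  exact (hhole (b - a + 2) (by omega)).false
    (SimpleGraph.Embedding.cycleGraphCons q v (fun _ => hv _) hq)

/-- Let `p : pathGraph m ↪g G` be a dominating induced path of `G`
(an embedding of the path graph is exactly an induced path), let `I` be the window of
`k` consecutive vertices `p i, …, p (i+k-1)`, and suppose `G` has no induced cycle of
length at least `k`.  If a vertex `v` outside `P` has a neighbour strictly to the left
of `I` and one strictly to the right of `I`, then `v` has a neighbour in `I`. -/
theorem stmt3 {V : Type*} (G : SimpleGraph V) (k m : ℕ)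
    (hhole : ∀ l, k ≤ l → IsEmpty (SimpleGraph.cycleGraph l ↪g G))
    (p : SimpleGraph.pathGraph m ↪g G)
    (hdom : ∀ v : V, ∃ j : Fin m, v = p j ∨ G.Adj v (p j))
    (i : ℕ) (hik : i + k ≤ m)
    (v : V) (hv : ∀ j : Fin m, v ≠ p j)
    (hleft : ∃ j : Fin m, (j : ℕ) < i ∧ G.Adj v (p j))
    (hright : ∃ j : Fin m, i + k ≤ (j : ℕ) ∧ G.Adj v (p j)) :
    ∃ j : Fin m, i ≤ (j : ℕ) ∧ (j : ℕ) < i + k ∧ G.Adj v (p j) :=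
  stmt3_general G k m hhole p i v hv hleft hright
end

section
/- Suppose C is a hereditary class of graphs with the strong Erdős–Hajnal property with constant c ∈ (0,1): every graph in C on n ≥ 1/c vertices contains two disjoint vertex sets X, Y each of size at least ⌈cn⌉ such that either all edges between X and Y are present or none are. Let c' > 0 satisfy c^{c'} ≥ 1/2. Then every graph G in C on n vertices contains an induced P4-free subgraph on at least n^{c'} vertices. -/
/-! An induced copy of `P₄` in `G[A ∪ B]`, where `(A, B)` is complete or anticomplete, lies inside
`A` or inside `B`, because both `P₄` and its complement are connected. So splitting off a
homogeneous pair of parts of size `≥ c n` and recursing into both parts yields a `P₄`-free set of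
size `f(n) ≥ 2 f(c n)`, and `f(n) = n ^ c'` satisfies this since `c ^ c' ≥ 1/2`. Below `n = 1/c`
two vertices suffice, as `n ^ c' < (1/c) ^ c' ≤ 2`. -/

open SimpleGraph Finset

lemma rpow_le_two_mul_rpow_mul {c c' x : ℝ} (hc : 0 ≤ c) (hcc' : 1 / 2 ≤ c ^ c') (hx : 0 ≤ x) :
    x ^ c' ≤ 2 * (c * x) ^ c' := by
  rw [Real.mul_rpow hc hx]
  nlinarith [Real.rpow_nonneg hx c']

lemma natCast_rpow_le_min_two {c c' : ℝ} {m : ℕ} (hc : 0 < c) (hc' : 0 < c')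
    (hcc' : 1 / 2 ≤ c ^ c') (hm : (m : ℝ) < 1 / c) : (m : ℝ) ^ c' ≤ (min m 2 : ℕ) := by
  have hcm : c * m ≤ 1 := by rw [lt_div_iff₀ hc] at hm; linarith
  have h2 : (m : ℝ) ^ c' ≤ 2 := calc
    (m : ℝ) ^ c' ≤ 2 * (c * m) ^ c' := rpow_le_two_mul_rpow_mul hc.le hcc' m.cast_nonneg
    _ ≤ 2 * 1 := by gcongr; exact Real.rpow_le_one (by positivity) hcm hc'.le
    _ = 2 := mul_one 2
  rcases m with _ | _ | m
  · simp [Real.zero_rpow hc'.ne']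
  · simp
  · simpa [show min (m + 2) 2 = 2 by omega] using h2

namespace SimpleGraph

variable {V W : Type*} {G : SimpleGraph V} {H : SimpleGraph W}

def IsHomogeneousPair (G : SimpleGraph V) (A B : Set V) : Prop :=
  (∀ x ∈ A, ∀ y ∈ B, G.Adj x y) ∨ (∀ x ∈ A, ∀ y ∈ B, ¬ G.Adj x y)

lemma IsHomogeneousPair.mono {A B A' B' : Set V} (h : G.IsHomogeneousPair A B) (hA : A' ⊆ A)
    (hB : B' ⊆ B) : G.IsHomogeneousPair A' B' := by
  rcases h with h | h
  · exact .inl fun x hx y hy ↦ h x (hA hx) y (hB hy)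
  · exact .inr fun x hx y hy ↦ h x (hA hx) y (hB hy)

lemma IsHomogeneousPair.image_of_comap {A B : Set W} (e : W ↪ V)
    (h : (G.comap e).IsHomogeneousPair A B) : G.IsHomogeneousPair (e '' A) (e '' B) := by
  rcases h with h | h
  · exact .inl <| by rintro _ ⟨x, hx, rfl⟩ _ ⟨y, hy, rfl⟩; exact h x hx y hy
  · exact .inr <| by rintro _ ⟨x, hx, rfl⟩ _ ⟨y, hy, rfl⟩; exact h x hx y hy

lemma isIndContained_induce_iff {s : Set V} :
    H ⊴ G.induce s ↔ ∃ f : H ↪g G, Set.range f ⊆ s := by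
  constructor
  · rintro ⟨φ⟩
    exact ⟨(Embedding.induce s).comp φ, by rintro _ ⟨w, rfl⟩; exact (φ w).2⟩
  · rintro ⟨f, hf⟩
    exact ⟨(G.induceHomOfLE hf).comp f.isoInduceRange.toEmbedding⟩

lemma not_isIndContained_induce_of_card_lt [Fintype W] {s : Finset V}
    (hs : #s < Fintype.card W) : ¬ H ⊴ G.induce s := by
  rintro ⟨φ⟩
  have := Fintype.card_le_of_injective φ φ.injective
  simp only [Finset.coe_sort_coe, Fintype.card_coe] at this
  omega

lemma Preconnected.range_subset_or_of_forall_not_adj (hH : H.Preconnected) (f : H →g G)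
    {A B : Set V} (hf : Set.range f ⊆ A ∪ B) (hAB : ∀ x ∈ A, ∀ y ∈ B, ¬ G.Adj x y) :
    Set.range f ⊆ A ∨ Set.range f ⊆ B := by
  simp only [Set.range_subset_iff] at hf ⊢
  by_contra! h
  obtain ⟨⟨u, huA⟩, ⟨v, hvB⟩⟩ := h
  have hvA : f v ∈ A := (hf v).resolve_right hvB
  obtain ⟨d, -, hdA, hdA'⟩ := (hH v u).some.exists_boundary_dart (f ⁻¹' A) hvA huA
  have hdB : f d.snd ∈ B := (hf _).resolve_left hdA'
  exact hAB _ hdA _ hdB (f.map_adj d.adj)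

/-- A complete pair of `G` is an anticomplete pair of `Gᶜ`, so the complete case is the
anticomplete case for the complementary embedding `Hᶜ ↪g Gᶜ`. -/
lemma IsIndContained.induce_union (hH : H.Preconnected) (hHc : Hᶜ.Preconnected) {A B : Set V}
    (hAB : G.IsHomogeneousPair A B) (h : H ⊴ G.induce (A ∪ B)) :
    H ⊴ G.induce A ∨ H ⊴ G.induce B := by
  obtain ⟨f, hf⟩ := isIndContained_induce_iff.mp h
  have hsub : Set.range f ⊆ A ∨ Set.range f ⊆ B := by
    rcases hAB with hAB | hAB
    · exact hHc.range_subset_or_of_forall_not_adj (Embedding.complEquiv f).toHom hf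
        fun x hx y hy hxy ↦ (compl_adj G x y).mp hxy |>.2 (hAB x hx y hy)
    · exact hH.range_subset_or_of_forall_not_adj f.toHom hf hAB
  exact hsub.imp (fun hA ↦ isIndContained_induce_iff.mpr ⟨f, hA⟩)
    fun hB ↦ isIndContained_induce_iff.mpr ⟨f, hB⟩

lemma pathGraph_four_compl_preconnected : (pathGraph 4)ᶜ.Preconnected := by
  have h03 : (pathGraph 4)ᶜ.Adj 0 3 := by simp [pathGraph_adj]
  have h : ∀ v, (pathGraph 4)ᶜ.Reachable 0 v := by
    intro v
    fin_cases v
    · rfl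
    · exact h03.reachable.trans (Adj.reachable (by simp [pathGraph_adj]))
    · exact Adj.reachable (by simp [pathGraph_adj])
    · exact h03.reachable
  exact fun u v ↦ (h u).symm.trans (h v)

theorem exists_subset_rpow_le_card_not_isIndContained [DecidableEq V] [Fintype W]
    (hH : H.Preconnected) (hHc : Hᶜ.Preconnected) (hW : 2 < Fintype.card W) {c c' : ℝ}
    (hc : 0 < c) (hc' : 0 < c') (hcc' : 1 / 2 ≤ c ^ c')
    (hG : ∀ X : Finset V, 1 / c ≤ #X → ∃ A ⊆ X, ∃ B ⊆ X, Disjoint A B ∧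
      c * #X ≤ #A ∧ c * #X ≤ #B ∧ G.IsHomogeneousPair A B)
    (X : Finset V) : ∃ s ⊆ X, (#X : ℝ) ^ c' ≤ #s ∧ ¬ H ⊴ G.induce s := by
  induction X using Finset.strongInduction with
  | H X ih =>
  by_cases hX : 1 / c ≤ #X
  · obtain ⟨A, hAX, B, hBX, hAB, hcA, hcB, hhom⟩ := hG X hX
    have hcX : 1 ≤ c * #X := by rw [div_le_iff₀ hc] at hX; linarith
    have hApos : 0 < #A := (Nat.cast_pos (α := ℝ)).mp (by linarith)
    have hBpos : 0 < #B := (Nat.cast_pos (α := ℝ)).mp (by linarith)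
    have hAX' : A ⊂ X := by
      obtain ⟨b, hb⟩ := card_pos.mp hBpos
      exact ssubset_of_subset_of_ne hAX fun h ↦ Finset.disjoint_left.mp hAB (h ▸ hBX hb) hb
    have hBX' : B ⊂ X := by
      obtain ⟨a, ha⟩ := card_pos.mp hApos
      exact ssubset_of_subset_of_ne hBX fun h ↦ Finset.disjoint_right.mp hAB (h ▸ hAX ha) ha
    obtain ⟨sA, hsA, hAsA, hfreeA⟩ := ih A hAX'
    obtain ⟨sB, hsB, hBsB, hfreeB⟩ := ih B hBX'
    refine ⟨sA ∪ sB, union_subset (hsA.trans hAX) (hsB.trans hBX), ?_, ?_⟩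
    · rw [card_union_of_disjoint (hAB.mono hsA hsB), Nat.cast_add]
      calc (#X : ℝ) ^ c' ≤ 2 * (c * #X) ^ c' :=
            rpow_le_two_mul_rpow_mul hc.le hcc' (by positivity)
        _ = (c * #X) ^ c' + (c * #X) ^ c' := two_mul _
        _ ≤ (#A : ℝ) ^ c' + (#B : ℝ) ^ c' := by gcongr
        _ ≤ #sA + #sB := add_le_add hAsA hBsB
    · rw [coe_union]
      intro h
      rcases h.induce_union hH hHc (hhom.mono (coe_subset.mpr hsA) (coe_subset.mpr hsB)) with h | h
      exacts [hfreeA h, hfreeB h]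
  · obtain ⟨s, hsX, hs⟩ := exists_subset_card_eq (min_le_left #X 2)
    refine ⟨s, hsX, ?_, not_isIndContained_induce_of_card_lt (by omega)⟩
    rw [hs]
    exact natCast_rpow_le_min_two hc hc' hcc' (not_le.mp hX)

end SimpleGraph

theorem stmt6_general (C : ∀ n : ℕ, SimpleGraph (Fin n) → Prop)
    (hher : ∀ (n m : ℕ) (G : SimpleGraph (Fin n)) (H : SimpleGraph (Fin m)),
      C n G → Nonempty (H ↪g G) → C m H)
    (c : ℝ) (hc0 : 0 < c)
    (hSEH : ∀ (n : ℕ) (G : SimpleGraph (Fin n)), C n G → (1 / c ≤ (n : ℝ)) →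
      ∃ X Y : Finset (Fin n), Disjoint X Y ∧
        ⌈c * n⌉₊ ≤ X.card ∧ ⌈c * n⌉₊ ≤ Y.card ∧
        ((∀ x ∈ X, ∀ y ∈ Y, G.Adj x y) ∨ (∀ x ∈ X, ∀ y ∈ Y, ¬ G.Adj x y)))
    (c' : ℝ) (hc' : 0 < c') (hcc' : (1 : ℝ) / 2 ≤ c ^ c') :
    ∀ (n : ℕ) (G : SimpleGraph (Fin n)), C n G →
      ∃ s : Finset (Fin n), (n : ℝ) ^ c' ≤ (s.card : ℝ) ∧
        IsEmpty (SimpleGraph.pathGraph 4 ↪g G.induce (s : Set (Fin n))) := by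
  intro n G hCG
  have hG : ∀ X : Finset (Fin n), 1 / c ≤ #X → ∃ A ⊆ X, ∃ B ⊆ X, Disjoint A B ∧
      c * #X ≤ #A ∧ c * #X ≤ #B ∧ G.IsHomogeneousPair A B := by
    intro X hX
    let e := (X.orderEmbOfFin rfl).toEmbedding
    have hCX : C #X (G.comap e) := hher _ _ G _ hCG ⟨Embedding.comap e G⟩
    obtain ⟨A, B, hAB, hA, hB, hhom⟩ := hSEH _ _ hCX hX
    have hmapX (D : Finset (Fin #X)) : D.map e ⊆ X := fun x hx ↦ by
      obtain ⟨i, -, rfl⟩ := mem_map.mp hx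
      exact X.orderEmbOfFin_mem rfl i
    refine ⟨A.map e, hmapX A, B.map e, hmapX B, (disjoint_map e).mpr hAB, ?_, ?_, ?_⟩
    · rw [card_map]; exact (Nat.le_ceil _).trans (by exact_mod_cast hA)
    · rw [card_map]; exact (Nat.le_ceil _).trans (by exact_mod_cast hB)
    · rw [coe_map, coe_map]; exact IsHomogeneousPair.image_of_comap e hhom
  obtain ⟨s, -, hs, hfree⟩ := exists_subset_rpow_le_card_not_isIndContained
    (pathGraph_preconnected 4) pathGraph_four_compl_preconnected (by simp) hc0 hc' hcc' hG univ
  exact ⟨s, by simpa using hs, not_nonempty_iff.mp hfree⟩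

/-- Let `C` be a hereditary class of graphs (one predicate for each
number of vertices, closed under induced subgraphs, i.e. under graph embeddings) with
the strong Erdős–Hajnal property with constant `c ∈ (0,1)`: every graph of `C` on
`n ≥ 1/c` vertices has two disjoint sets `X, Y` of size at least `⌈cn⌉` that are
completely joined or completely nonadjacent.  If `c' > 0` satisfies `c ^ c' ≥ 1/2`,
then every graph of `C` on `n` vertices has a `P₄`-free induced subgraph on at least
`n ^ c'` vertices. -/
theorem stmt6 (C : ∀ n : ℕ, SimpleGraph (Fin n) → Prop)
    (hher : ∀ (n m : ℕ) (G : SimpleGraph (Fin n)) (H : SimpleGraph (Fin m)),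
      C n G → Nonempty (H ↪g G) → C m H)
    (c : ℝ) (hc0 : 0 < c) (hc1 : c < 1)
    (hSEH : ∀ (n : ℕ) (G : SimpleGraph (Fin n)), C n G → (1 / c ≤ (n : ℝ)) →
      ∃ X Y : Finset (Fin n), Disjoint X Y ∧
        ⌈c * n⌉₊ ≤ X.card ∧ ⌈c * n⌉₊ ≤ Y.card ∧
        ((∀ x ∈ X, ∀ y ∈ Y, G.Adj x y) ∨ (∀ x ∈ X, ∀ y ∈ Y, ¬ G.Adj x y)))
    (c' : ℝ) (hc' : 0 < c') (hcc' : (1 : ℝ) / 2 ≤ c ^ c') :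
    ∀ (n : ℕ) (G : SimpleGraph (Fin n)), C n G →
      ∃ s : Finset (Fin n), (n : ℝ) ^ c' ≤ (s.card : ℝ) ∧
        IsEmpty (SimpleGraph.pathGraph 4 ↪g G.induce (s : Set (Fin n))) :=
  stmt6_general C hher c hc0 hSEH c' hc' hcc'
end

section
/- Let T be a rooted tree with nonnegative node weights summing to 1, and suppose some path P from the root has been chosen greedily (at each node, descend into the heaviest subtree). If w(V(P)) < 1/4 and every connected component of T − V(P) has weight less than 1/4, then the components of T − V(P) can be partitioned into two groups A and B, each of total weight at least 1/4, and A and B are unrelated. -/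
open Classical in
lemma split_lemma {α : Type*} [DecidableEq α] (s : Finset α) (f : α → ℝ)
    (hlt : ∀ a ∈ s, f a < 1/4) (hsum : 3/4 ≤ ∑ a ∈ s, f a) :
    ∃ t ⊆ s, 1/4 ≤ ∑ a ∈ t, f a ∧ 1/4 ≤ ∑ a ∈ s \ t, f a := by
  classical
  set T := s.powerset.filter (fun t => 1/4 ≤ ∑ a ∈ t, f a) with hT
  have hsT : s ∈ T := by
    simp only [hT, Finset.mem_filter, Finset.mem_powerset]
    exact ⟨le_refl _, by linarith⟩
  obtain ⟨t, htT, hmin⟩ := T.exists_min_image Finset.card ⟨s, hsT⟩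
  simp only [hT, Finset.mem_filter, Finset.mem_powerset] at htT
  obtain ⟨hts, ht4⟩ := htT
  refine ⟨t, hts, ht4, ?_⟩
  have htne : t.Nonempty := by
    rcases t.eq_empty_or_nonempty with h | h
    · rw [h] at ht4; simp at ht4; linarith
    · exact h
  obtain ⟨a, ha⟩ := htne
  have hesum : ∑ b ∈ t.erase a, f b < 1/4 := by
    by_contra h
    push_neg at h
    have hmem : t.erase a ∈ T := by
      simp only [hT, Finset.mem_filter, Finset.mem_powerset]
      exact ⟨(t.erase_subset a).trans hts, h⟩
    have h1 := hmin _ hmem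
    have h2 := Finset.card_erase_lt_of_mem ha
    omega
  have heq := Finset.sum_erase_add t f ha
  have hfa : f a < 1/4 := hlt a (hts ha)
  have hst : ∑ a ∈ s \ t, f a = ∑ a ∈ s, f a - ∑ a ∈ t, f a :=
    Finset.sum_sdiff_eq_sub hts
  linarith


open Classical in
/-- A finite rooted tree is modelled by a partial order with least
element `r` in which the set of ancestors of every node is a chain.  Let `P` be the
root-to-node path `{u | u ≤ x}`, chosen greedily: whenever the path descends from `u`
to a child `v' ∈ P`, `v'` heads a subtree at least as heavy as the subtree of any
child `v ∉ P` of `u`.  If `w(P) < 1/4` and every component of `T − P` (the subtree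
hanging at a minimal node of the complement of `P`) has weight less than `1/4`, then
the components can be split into two groups `A`, `B`, each of weight at least `1/4`,
which are unrelated. -/
theorem stmt8 {V : Type*} [Fintype V] [DecidableEq V] [PartialOrder V]
    (r : V) (hroot : ∀ v : V, r ≤ v)
    (htree : ∀ v : V, IsChain (· ≤ ·) {u : V | u ≤ v})
    (w : V → ℝ) (hw : ∀ v, 0 ≤ w v) (hw1 : ∑ v, w v = 1)
    (x : V) (P : Finset V) (hP : ∀ u : V, u ∈ P ↔ u ≤ x)
    (hgreedy : ∀ u v v' : V, u ⋖ v → u ⋖ v' → v' ∈ P → v ∉ P →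
      ∑ z ∈ Finset.univ.filter (v ≤ ·), w z ≤ ∑ z ∈ Finset.univ.filter (v' ≤ ·), w z)
    (hPlight : ∑ u ∈ P, w u < 1 / 4)
    (hcomp : ∀ m : V, m ∉ P → (∀ u < m, u ∈ P) →
      ∑ z ∈ Finset.univ.filter (m ≤ ·), w z < 1 / 4) :
    ∃ A B : Finset V, Disjoint A B ∧ A ∪ B = Pᶜ ∧
      1 / 4 ≤ ∑ u ∈ A, w u ∧ 1 / 4 ≤ ∑ u ∈ B, w u ∧
      (∀ a ∈ A, ∀ b ∈ B, ¬ a ≤ b ∧ ¬ b ≤ a) := by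
  classical
  set M : Finset V := Finset.univ.filter (fun m => m ∉ P ∧ ∀ u, u < m → u ∈ P) with hM
  set comp : V → Finset V := fun m => Finset.univ.filter (m ≤ ·) with hcompdef
  have hMmem : ∀ m, m ∈ M ↔ (m ∉ P ∧ ∀ u, u < m → u ∈ P) := by
    intro m; simp [hM]
  -- distinct minimal nodes give incomparable subtrees
  have h2 : ∀ m1 ∈ M, ∀ m2 ∈ M, m1 ≠ m2 → ∀ a b : V, m1 ≤ a → m2 ≤ b → ¬ a ≤ b := by
    intro m1 hm1 m2 hm2 hne a b h1a h2b hab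
    have hm1b : m1 ≤ b := le_trans h1a hab
    have hcomp := htree b hm1b h2b hne
    rw [hMmem] at hm1 hm2
    rcases hcomp with h | h
    · exact hm1.1 (hm2.2 m1 (lt_of_le_of_ne h hne))
    · exact hm2.1 (hm1.2 m2 (lt_of_le_of_ne h hne.symm))
  -- components lie in Pᶜ
  have h1 : ∀ m ∈ M, comp m ⊆ Pᶜ := by
    intro m hm z hz
    rw [hcompdef] at hz
    simp only [Finset.mem_filter, Finset.mem_univ, true_and] at hz
    rw [Finset.mem_compl]
    intro hzP
    rw [hMmem] at hm
    exact hm.1 ((hP m).mpr (le_trans hz ((hP z).mp hzP)))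
  -- components are pairwise disjoint
  have h3 : ∀ m1 ∈ M, ∀ m2 ∈ M, m1 ≠ m2 → Disjoint (comp m1) (comp m2) := by
    intro m1 hm1 m2 hm2 hne
    rw [Finset.disjoint_left]
    intro z hz1 hz2
    simp only [hcompdef, Finset.mem_filter, Finset.mem_univ, true_and] at hz1 hz2
    exact h2 m1 hm1 m2 hm2 hne z z hz1 hz2 le_rfl
  -- components cover Pᶜ
  have h4 : M.biUnion comp = Pᶜ := by
    apply Finset.Subset.antisymm
    · intro z hz
      rw [Finset.mem_biUnion] at hz
      obtain ⟨m, hm, hzm⟩ := hz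
      exact h1 m hm hzm
    · intro z hz
      rw [Finset.mem_compl] at hz
      set C : Finset V := Finset.univ.filter (fun u => u ≤ z ∧ u ∉ P) with hC
      have hzC : z ∈ C := by simp [hC, hz]
      obtain ⟨m, hmC, hmmin⟩ : ∃ m ∈ C, ∀ x ∈ C, ¬x < m := by
        obtain ⟨m, hm⟩ := Finset.exists_minimal (s := C) ⟨z, hzC⟩
        exact ⟨m, hm.1, fun y hy hlt => hm.not_lt hy hlt⟩
      simp only [hC, Finset.mem_filter, Finset.mem_univ, true_and] at hmC
      have hmM : m ∈ M := by
        rw [hMmem]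
        refine ⟨hmC.2, fun u hu => ?_⟩
        by_contra huP
        have huC : u ∈ C := by
          simp [hC, huP, le_trans hu.le hmC.1]
        exact hmmin u huC hu
      rw [Finset.mem_biUnion]
      exact ⟨m, hmM, by simp [hcompdef, hmC.1]⟩
  -- total weight of components
  have hsum : ∑ m ∈ M, ∑ z ∈ comp m, w z = ∑ z ∈ Pᶜ, w z := by
    rw [← Finset.sum_biUnion, h4]
    intro m1 hm1 m2 hm2 hne
    exact h3 m1 hm1 m2 hm2 hne
  have htot : ∑ u ∈ P, w u + ∑ u ∈ Pᶜ, w u = 1 := by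
    rw [Finset.sum_add_sum_compl]; exact hw1
  have hbig : 3/4 ≤ ∑ m ∈ M, ∑ z ∈ comp m, w z := by
    rw [hsum]; linarith
  have hsmall : ∀ m ∈ M, (∑ z ∈ comp m, w z) < 1/4 := by
    intro m hm
    rw [hMmem] at hm
    exact hcomp m hm.1 (fun u hu => hm.2 u hu)
  obtain ⟨S, hSM, hS4, hMS4⟩ := split_lemma M (fun m => ∑ z ∈ comp m, w z) hsmall hbig
  refine ⟨S.biUnion comp, (M \ S).biUnion comp, ?_, ?_, ?_, ?_, ?_⟩
  · rw [Finset.disjoint_left]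
    intro z hz1 hz2
    rw [Finset.mem_biUnion] at hz1 hz2
    obtain ⟨m1, hm1, hzm1⟩ := hz1
    obtain ⟨m2, hm2, hzm2⟩ := hz2
    simp only [hcompdef, Finset.mem_filter, Finset.mem_univ, true_and] at hzm1 hzm2
    have hne : m1 ≠ m2 := by
      rintro rfl
      exact (Finset.mem_sdiff.mp hm2).2 hm1
    exact h2 m1 (hSM hm1) m2 (Finset.mem_sdiff.mp hm2).1 hne z z hzm1 hzm2 le_rfl
  · ext z
    simp only [Finset.mem_union, Finset.mem_biUnion, ← h4, Finset.mem_sdiff]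
    constructor
    · rintro (⟨m, hm, h⟩ | ⟨m, hm, h⟩)
      exacts [⟨m, hSM hm, h⟩, ⟨m, hm.1, h⟩]
    · rintro ⟨m, hm, h⟩
      by_cases hS : m ∈ S
      · exact Or.inl ⟨m, hS, h⟩
      · exact Or.inr ⟨m, ⟨hm, hS⟩, h⟩
  · rw [Finset.sum_biUnion (fun m1 hm1 m2 hm2 hne => h3 m1 (hSM hm1) m2 (hSM hm2) hne)]
    exact hS4
  · rw [Finset.sum_biUnion (fun m1 hm1 m2 hm2 hne =>
      h3 m1 (Finset.mem_sdiff.mp hm1).1 m2 (Finset.mem_sdiff.mp hm2).1 hne)]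
    exact hMS4
  · intro a ha b hb
    rw [Finset.mem_biUnion] at ha hb
    obtain ⟨m1, hm1, ham1⟩ := ha
    obtain ⟨m2, hm2, hbm2⟩ := hb
    simp only [hcompdef, Finset.mem_filter, Finset.mem_univ, true_and] at ham1 hbm2
    have hne : m1 ≠ m2 := by
      rintro rfl
      exact (Finset.mem_sdiff.mp hm2).2 hm1
    exact ⟨h2 m1 (hSM hm1) m2 (Finset.mem_sdiff.mp hm2).1 hne a b ham1 hbm2,
      h2 m2 (Finset.mem_sdiff.mp hm2).1 m1 (hSM hm1) hne.symm b a hbm2 ham1⟩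
end

section
/- Let G be a connected graph with a spanning dominating construction as follows: a rooted subtree T of G built by the stack algorithm (maintaining an induced path from the root as the stack, adding a vertex y adjacent only to the top of the stack among stack vertices, when y has a neighbor outside the closed neighborhood of T). Then at every step of the algorithm, the set of vertices currently in the stack induces a path in G starting at the root. -/
/-!
An embedding of `pathGraph (n + 1)` is exactly an induced path. Appending `y` with `Fin.snoc`
keeps the map injective since `y` is new, and keeps it an embedding since the only path vertex
adjacent to `y` is the end, which is also the only vertex adjacent to `Fin.last (n + 1)` in
`pathGraph (n + 2)`.
-/

namespace SimpleGraph

variable {V : Type*} {G : SimpleGraph V} {n : ℕ}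

theorem pathGraph_adj_castSucc_castSucc {i j : Fin (n + 1)} :
    (pathGraph (n + 2)).Adj i.castSucc j.castSucc ↔ (pathGraph (n + 1)).Adj i j := by
  simp [pathGraph_adj]

theorem pathGraph_adj_castSucc_last {i : Fin (n + 1)} :
    (pathGraph (n + 2)).Adj i.castSucc (Fin.last (n + 1)) ↔ i = Fin.last n := by
  simp only [pathGraph_adj, Fin.val_castSucc, Fin.val_last, Fin.ext_iff]
  omega

namespace Embedding

variable (p : pathGraph (n + 1) ↪g G) (y : V) (hy : y ∉ Set.range p)
  (hadj : ∀ i, G.Adj y (p i) ↔ i = Fin.last n)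

def pathGraphSnoc : pathGraph (n + 2) ↪g G where
  toFun := Fin.snoc p y
  inj' := Fin.snoc_injective_of_injective p.injective hy
  map_rel_iff' {a b} := by
    induction a using Fin.lastCases with
    | last =>
      induction b using Fin.lastCases with
      | last => simp
      | cast j =>
        simpa [hadj, (pathGraph _).adj_comm _ j.castSucc] using
          (pathGraph_adj_castSucc_last (i := j)).symm
    | cast i =>
      induction b using Fin.lastCases with
      | last => simpa [G.adj_comm _ y, hadj] using pathGraph_adj_castSucc_last.symm
      | cast j => simpa using pathGraph_adj_castSucc_castSucc.symm

@[simp]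
theorem pathGraphSnoc_castSucc (i : Fin (n + 1)) : p.pathGraphSnoc y hy hadj i.castSucc = p i :=
  Fin.snoc_castSucc (α := fun _ => V) ..

@[simp]
theorem pathGraphSnoc_last : p.pathGraphSnoc y hy hadj (Fin.last (n + 1)) = y :=
  Fin.snoc_last (α := fun _ => V) ..

end Embedding

end SimpleGraph

/-- invariant of the stack algorithm.  At every step of the stack
algorithm the stack induces a path of `G` starting at the root `r`.  Popping
trivially preserves this, so the content is the push step: if the current stack is an
induced path `p : pathGraph (m+1) ↪g G` starting at `r` (an embedding of the path
graph is exactly an induced path), and the pushed vertex `y` is adjacent, among the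
stack vertices, exactly to the top `p (Fin.last m)`, then the new stack is again an
induced path starting at `r`: there is an embedding `q : pathGraph (m+2) ↪g G`
extending `p` with `q 0 = r` and last vertex `y`. -/
theorem stmt14 {V : Type*} (G : SimpleGraph V) (r : V) (m : ℕ)
    (p : SimpleGraph.pathGraph (m + 1) ↪g G) (hp0 : p 0 = r)
    (y : V) (hy : ∀ i : Fin (m + 1), y ≠ p i)
    (hadj : ∀ i : Fin (m + 1), G.Adj y (p i) ↔ i = Fin.last m) :
    ∃ q : SimpleGraph.pathGraph (m + 2) ↪g G,
      q 0 = r ∧ (∀ i : Fin (m + 1), q i.castSucc = p i) ∧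
      q (Fin.last (m + 1)) = y := by
  refine ⟨p.pathGraphSnoc y (fun ⟨i, hi⟩ => hy i hi.symm) hadj, ?_, fun i => by simp,
    by simp⟩
  rw [← Fin.castSucc_zero, SimpleGraph.Embedding.pathGraphSnoc_castSucc, hp0]
end

section
/- Let T be a rooted tree obtained from the stack algorithm on a connected graph G, and for each vertex v of G let r(v) be the root of the closed neighborhood of v intersected with T (the minimal-in-deletion-order element among the descendance-minimal elements). If xy is an edge of G, then r(x) and r(y) are related in T (one is an ancestor of the other). -/
/-!
Stack intervals are laminar, so if `r(x)` and `r(y)` were unrelated, one interval, say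
that of `r(x)`, would end before the other begins. Every node of `N̄(y) ∩ T` is a descendant
of `r(y)` or is pushed after `r(y)` is popped, so when `r(x)` is popped nothing of `N̄(y)` is
in the tree yet. Then `x` is outside the tree, active through its neighbour `y`, and `r(x)`
is its only neighbour still on the stack: precisely the situation in which the algorithm
does not pop `r(x)`.
-/

/-- A run of the stack algorithm on a connected graph `G` with root `r`, recorded by
the output tree `T` together with, for every node `t ∈ T`, its addition time `a t`
(when `t` was pushed on the stack) and its deletion time `d t` (when `t` was popped,
giving the deletion order).  A node `u ∈ T` is an ancestor of `v ∈ T` exactly when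
the stack interval of `v` is nested in that of `u`.  The fields record the
properties guaranteed by the algorithm: the root is pushed first and popped last,
every node is pushed before it is popped, times are distinct, stack intervals are
laminar (nested or disjoint), every non-root node is pushed while adjacent to the
current top of the stack, and a node is popped only when no active vertex has it as
its unique neighbour on the stack. -/
structure StackAlgRun (V : Type*) [Fintype V] [DecidableEq V] where
  G : SimpleGraph V
  conn : G.Connected
  r : V
  T : Finset V
  a : V → ℕ
  d : V → ℕ
  root_mem : r ∈ T
  a_lt_d : ∀ t ∈ T, a t < d t
  root_first : ∀ t ∈ T, a r ≤ a t ∧ d t ≤ d r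
  a_inj : ∀ t ∈ T, ∀ u ∈ T, a t = a u → t = u
  d_inj : ∀ t ∈ T, ∀ u ∈ T, d t = d u → t = u
  laminar : ∀ u ∈ T, ∀ v ∈ T, a u ≤ a v → d v ≤ d u ∨ d u < a v
  parent_adj : ∀ v ∈ T, v ≠ r → ∃ u ∈ T, G.Adj u v ∧ a u < a v ∧ d v ≤ d u
  dominating : ∀ x : V, x ∈ T ∨ ∃ t ∈ T, G.Adj x t
  pop_sound : ∀ t ∈ T, ¬ ∃ y : V,
    (∀ _hy : y ∈ T, d t < a y) ∧                     -- y is not yet in the tree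
    (∃ u ∈ T, a u ≤ d t ∧ G.Adj y u) ∧              -- y is in the neighbourhood of T
    (∃ z : V, G.Adj y z ∧                            -- y is active: a neighbour z
      ∀ u ∈ T, a u ≤ d t → z ≠ u ∧ ¬ G.Adj z u) ∧   -- outside the closed nbhd of T
    G.Adj y t ∧                                      -- t is a neighbour of y, and is
    (∀ u ∈ T, a u ≤ d t → d t ≤ d u → G.Adj y u → u = t)  -- the only one on the stack

variable {V : Type*} [Fintype V] [DecidableEq V]

/-- `u` is an ancestor of `v` in the tree of the run (descendance order). -/
def StackAlgRun.Anc (S : StackAlgRun V) (u v : V) : Prop :=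
  S.a u ≤ S.a v ∧ S.d v ≤ S.d u

/-- Two nodes are related if one is an ancestor of the other. -/
def StackAlgRun.Related (S : StackAlgRun V) (u v : V) : Prop :=
  S.Anc u v ∨ S.Anc v u

/-- `u = R(N)` is the root of a set `N` of nodes of the tree: it belongs to `N`, it is
minimal in `N` for the descendance order, and among the descendance-minimal elements
of `N` it is the first one in the deletion order. -/
def StackAlgRun.IsRootOf (S : StackAlgRun V) (N : Finset V) (u : V) : Prop :=
  u ∈ N ∧ (∀ t ∈ N, S.Anc t u → t = u) ∧
    ∀ t ∈ N, (∀ t' ∈ N, S.Anc t' t → t' = t) → S.d u ≤ S.d t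

namespace StackAlgRun

open Classical

variable (S : StackAlgRun V)

/-- `N̄(x) ∩ T`. -/
noncomputable def closedNbhdTree (x : V) : Finset V :=
  S.T.filter fun t => t = x ∨ S.G.Adj x t

lemma closedNbhdTree_subset (x : V) : S.closedNbhdTree x ⊆ S.T :=
  Finset.filter_subset _ _

lemma mem_closedNbhdTree_of_adj {x t : V} (ht : t ∈ S.T) (h : S.G.Adj x t) :
    t ∈ S.closedNbhdTree x :=
  Finset.mem_filter.2 ⟨ht, Or.inr h⟩

lemma self_mem_closedNbhdTree {x : V} (hx : x ∈ S.T) : x ∈ S.closedNbhdTree x :=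
  Finset.mem_filter.2 ⟨hx, Or.inl rfl⟩

lemma anc_trans {u v w : V} (huv : S.Anc u v) (hvw : S.Anc v w) : S.Anc u w :=
  ⟨huv.1.trans hvw.1, hvw.2.trans huv.2⟩

lemma related_or_d_lt_a_or_d_lt_a {u v : V} (hu : u ∈ S.T) (hv : v ∈ S.T) :
    S.Related u v ∨ S.d u < S.a v ∨ S.d v < S.a u := by
  rcases le_total (S.a u) (S.a v) with hle | hle
  · rcases S.laminar u hu v hv hle with hd | hd
    · exact Or.inl (Or.inl ⟨hle, hd⟩)
    · exact Or.inr (Or.inl hd)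
  · rcases S.laminar v hv u hu hle with hd | hd
    · exact Or.inl (Or.inr ⟨hle, hd⟩)
    · exact Or.inr (Or.inr hd)

lemma exists_minimal_anc {N : Finset V} (hN : N ⊆ S.T) {t : V} (ht : t ∈ N) :
    ∃ m ∈ N, S.Anc m t ∧ ∀ t' ∈ N, S.Anc t' m → t' = m := by
  obtain ⟨m, hm, hmin⟩ := Finset.exists_min_image (N.filter fun t' => S.Anc t' t) S.a
    ⟨t, Finset.mem_filter.2 ⟨ht, le_rfl, le_rfl⟩⟩
  obtain ⟨hmN, hmt⟩ := Finset.mem_filter.1 hm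
  refine ⟨m, hmN, hmt, fun t' ht' ht'm => ?_⟩
  have ht'_anc : t' ∈ N.filter fun t'' => S.Anc t'' t :=
    Finset.mem_filter.2 ⟨ht', S.anc_trans ht'm hmt⟩
  exact S.a_inj t' (hN ht') m (hN hmN) (le_antisymm ht'm.1 (hmin t' ht'_anc))

lemma IsRootOf.anc_or_d_lt_a {S : StackAlgRun V} {N : Finset V} (hN : N ⊆ S.T) {w : V}
    (hw : S.IsRootOf N w) {t : V} (ht : t ∈ N) : S.Anc w t ∨ S.d w < S.a t := by
  obtain ⟨hwN, hwmin, hwfirst⟩ := hw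
  obtain ⟨m, hmN, hmt, hmmin⟩ := S.exists_minimal_anc hN ht
  have hdwm : S.d w ≤ S.d m := hwfirst m hmN hmmin
  rcases S.related_or_d_lt_a_or_d_lt_a (hN hwN) (hN hmN) with (hwm | hmw) | hwm | hmw
  · exact Or.inl (S.anc_trans hwm hmt)
  · exact Or.inl (hwmin m hmN hmw ▸ hmt)
  · exact Or.inr (hwm.trans_le hmt.1)
  · exact absurd ((S.a_lt_d w (hN hwN)).trans_le hdwm) hmw.not_gt

lemma a_le_d_of_adj {x y rx ry : V} (hxy : S.G.Adj x y)
    (hrx : S.IsRootOf (S.closedNbhdTree x) rx) (hry : S.IsRootOf (S.closedNbhdTree y) ry) :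
    S.a ry ≤ S.d rx := by
  by_contra! h
  have hrxT : rx ∈ S.T := S.closedNbhdTree_subset x hrx.1
  have hryT : ry ∈ S.T := S.closedNbhdTree_subset y hry.1
  have pushed_late : ∀ t ∈ S.closedNbhdTree y, S.d rx < S.a t := fun t ht =>
    (hry.anc_or_d_lt_a (S.closedNbhdTree_subset y) ht).elim
      (fun hanc => h.trans_le hanc.1) (fun hlt => h.trans ((S.a_lt_d ry hryT).trans hlt))
  have hx_late : x ∈ S.T → S.d rx < S.a x := fun hxT =>
    pushed_late x (S.mem_closedNbhdTree_of_adj hxT hxy.symm)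
  have hx_rx : S.G.Adj x rx := by
    rcases (Finset.mem_filter.1 hrx.1).2 with rfl | hadj
    · exact absurd (hx_late hrxT) (S.a_lt_d rx hrxT).not_gt
    · exact hadj
  refine S.pop_sound rx hrxT ⟨x, hx_late, ⟨rx, hrxT, (S.a_lt_d rx hrxT).le, hx_rx⟩,
    ⟨y, hxy, fun u hu hau => ⟨?_, ?_⟩⟩, hx_rx, fun u hu hau hdu hxu => ?_⟩
  · rintro rfl
    exact hau.not_gt (pushed_late y (S.self_mem_closedNbhdTree hu))
  · exact fun hyu => hau.not_gt (pushed_late u (S.mem_closedNbhdTree_of_adj hu hyu))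
  · rcases hrx.anc_or_d_lt_a (S.closedNbhdTree_subset x) (S.mem_closedNbhdTree_of_adj hu hxu)
      with hanc | hlt
    · exact S.d_inj u hu rx hrxT (le_antisymm hanc.2 hdu)
    · exact absurd hau hlt.not_ge

end StackAlgRun

open Classical in
/-- key lemma.  For a vertex `x` of `G`, `r(x)` is the root of
`N̄(x) ∩ T`, the closed neighbourhood of `x` intersected with the tree (well defined
since `T` dominates `G`).  If `xy` is an edge of `G` then `r(x)` and `r(y)` are
related: one is an ancestor of the other. -/
theorem stmt18 (S : StackAlgRun V) (x y : V) (hxy : S.G.Adj x y) (rx ry : V)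
    (hrx : S.IsRootOf (S.T.filter fun t => t = x ∨ S.G.Adj x t) rx)
    (hry : S.IsRootOf (S.T.filter fun t => t = y ∨ S.G.Adj y t) ry) :
    S.Related rx ry := by
  rcases S.related_or_d_lt_a_or_d_lt_a (S.closedNbhdTree_subset x hrx.1)
      (S.closedNbhdTree_subset y hry.1) with h | h | h
  · exact h
  · exact absurd (S.a_le_d_of_adj hxy hrx hry) h.not_ge
  · exact absurd (S.a_le_d_of_adj hxy.symm hry hrx) h.not_ge
end
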